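/- Consider an N-player game with strategy sets K_i ⊆ ℝ^{n_i} and cost functions f_i, and assume 0 ∈ K and each K_i is symmetric (x ∈ K_i implies −x ∈ K_i). Then the game is a potential game if and only if for all players i < j, all z_i ∈ K_i, z_j ∈ K_j, z_{-{i,j}} ∈ K_{-{i,j}}, and all y_i, y_j with z_i + y_i ∈ K_i and z_j + y_j ∈ K_j, one has h_{ij}(z_i, z_j, y_i, y_j; z_{-{i,j}}) = h_{ij}(0, 0, z_i + y_i, z_j + y_j; z_{-{i,j}}) − h_{ij}(0, 0, z_i, z_j; z_{-{i,j}}). -/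

import Mathlib

noncomputable section

/-- The set of joint strategy profiles of a game with strategy sets `K i ⊆ ℝ^{n i}`. -/
def jointK {N : ℕ} {n : Fin N → ℕ}
    (K : ∀ i, Set (EuclideanSpace ℝ (Fin (n i)))) :
    Set (∀ i, EuclideanSpace ℝ (Fin (n i))) :=
  {x | ∀ i, x i ∈ K i}

/-- `φ` is an exact potential function for the game with strategy sets `K` and costs `f`. -/
def IsPotential {N : ℕ} {n : Fin N → ℕ}
    (K : ∀ i, Set (EuclideanSpace ℝ (Fin (n i))))
    (f : Fin N → (∀ i, EuclideanSpace ℝ (Fin (n i))) → ℝ)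
    (φ : (∀ i, EuclideanSpace ℝ (Fin (n i))) → ℝ) : Prop :=
  ∀ i : Fin N, ∀ x ∈ jointK K, ∀ xi' ∈ K i,
    f i (Function.update x i xi') - f i x = φ (Function.update x i xi') - φ x

/-- The game is a potential game. -/
def IsPotentialGame {N : ℕ} {n : Fin N → ℕ}
    (K : ∀ i, Set (EuclideanSpace ℝ (Fin (n i))))
    (f : Fin N → (∀ i, EuclideanSpace ℝ (Fin (n i))) → ℝ) : Prop :=
  ∃ φ, IsPotential K f φ

/-- `hij f i j z yi yj` : the pairwise incremental cost difference
`f_i(z_i+y_i, z_j; z₋) − f_i(z_i, z_j; z₋) + f_j(z_j+y_j, z_i+y_i; z₋) − f_j(z_j, z_i+y_i; z₋)`. -/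
def hij {N : ℕ} {n : Fin N → ℕ}
    (f : Fin N → (∀ k, EuclideanSpace ℝ (Fin (n k))) → ℝ)
    (i j : Fin N) (z : ∀ k, EuclideanSpace ℝ (Fin (n k)))
    (yi : EuclideanSpace ℝ (Fin (n i))) (yj : EuclideanSpace ℝ (Fin (n j))) : ℝ :=
  f i (Function.update z i (z i + yi)) - f i z
    + f j (Function.update (Function.update z i (z i + yi)) j (z j + yj))
    - f j (Function.update z i (z i + yi))

/-!
Necessity: for an exact potential `φ`, `h_{ij}(z, y_i, y_j)` is the change of `φ` when players `i`
and `j` move in turn, so both sides of the identity are differences of values of `φ`.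

Sufficiency: the identity with `y_j = 0` says that the change of `f_j` caused by a move of player
`j` varies with player `i`'s strategy exactly as the change of `f_i` caused by a move of player `i`
varies with player `j`'s strategy. A potential is then obtained by switching the players on one at
a time from the zero profile, `φ(x) = ∑_k (f_k(x_{≤k}, 0) − f_k(x_{<k}, 0))`; under a unilateral
deviation of player `i` the change of the `k`-th summand equals the increment from `k` to `k + 1`
of `t ↦ f_i(x'_{<t}, 0) − f_i(x_{<t}, 0)`, so the sum telescopes to `f_i(x') − f_i(x)`.
-/

open Function

section Truncation

variable {N : ℕ} {E : Fin N → Type*} [∀ i, Zero (E i)]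

def truncate (t : ℕ) (x : ∀ i, E i) : ∀ i, E i :=
  fun m => if (m : ℕ) < t then x m else 0

theorem truncate_zero (x : ∀ i, E i) : truncate 0 x = 0 := by
  funext m
  simp [truncate]

theorem truncate_eq_self (x : ∀ i, E i) : truncate N x = x := by
  funext m
  simp [truncate]

theorem truncate_apply_of_le {t : ℕ} {m : Fin N} (h : t ≤ m) (x : ∀ i, E i) :
    truncate t x m = 0 :=
  if_neg h.not_gt

theorem truncate_succ (x : ∀ i, E i) (k : Fin N) :
    truncate (k + 1) x = update (truncate k x) k (x k) := by
  funext m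
  rcases eq_or_ne m k with rfl | hmk
  · simp [truncate]
  · simp [truncate, hmk, le_iff_lt_or_eq, Fin.val_ne_of_ne hmk]

theorem truncate_update_of_lt {t : ℕ} {i : Fin N} (h : (i : ℕ) < t) (x : ∀ i, E i) (v : E i) :
    truncate t (update x i v) = update (truncate t x) i v := by
  funext m
  rcases eq_or_ne m i with rfl | hmi
  · simp [truncate, h]
  · simp [truncate, hmi]

theorem truncate_update_of_le {t : ℕ} {i : Fin N} (h : t ≤ i) (x : ∀ i, E i) (v : E i) :
    truncate t (update x i v) = truncate t x := by
  funext m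
  rcases eq_or_ne m i with rfl | hmi
  · simp [truncate_apply_of_le h]
  · simp [truncate, hmi]

def sequentialPotential (f : Fin N → (∀ i, E i) → ℝ) (x : ∀ i, E i) : ℝ :=
  ∑ k : Fin N, (f k (truncate (k + 1) x) - f k (truncate k x))

end Truncation

section Game

variable {N : ℕ} {n : Fin N → ℕ} {K : ∀ i, Set (EuclideanSpace ℝ (Fin (n i)))}
  {f : Fin N → (∀ i, EuclideanSpace ℝ (Fin (n i))) → ℝ}

theorem update_mem_jointK {x : ∀ i, EuclideanSpace ℝ (Fin (n i))} (hx : x ∈ jointK K)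
    {i : Fin N} {a : EuclideanSpace ℝ (Fin (n i))} (ha : a ∈ K i) :
    update x i a ∈ jointK K := by
  intro m
  rcases eq_or_ne m i with rfl | hmi
  · simpa using ha
  · simpa [hmi] using hx m

theorem truncate_mem_jointK (h0 : (0 : ∀ i, EuclideanSpace ℝ (Fin (n i))) ∈ jointK K)
    {x : ∀ i, EuclideanSpace ℝ (Fin (n i))} (hx : x ∈ jointK K) (t : ℕ) :
    truncate t x ∈ jointK K := by
  intro m
  by_cases h : (m : ℕ) < t
  · simpa [truncate, h] using hx m
  · simpa [truncate, h] using h0 m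

def HijCondition (K : ∀ i, Set (EuclideanSpace ℝ (Fin (n i))))
    (f : Fin N → (∀ i, EuclideanSpace ℝ (Fin (n i))) → ℝ) : Prop :=
  ∀ i j : Fin N, i < j → ∀ z ∈ jointK K,
    ∀ (yi : EuclideanSpace ℝ (Fin (n i))) (yj : EuclideanSpace ℝ (Fin (n j))),
      z i + yi ∈ K i → z j + yj ∈ K j →
      hij f i j z yi yj
        = hij f i j (update (update z i 0) j 0) (z i + yi) (z j + yj)
          - hij f i j (update (update z i 0) j 0) (z i) (z j)

theorem IsPotential.hij_eq {φ : (∀ i, EuclideanSpace ℝ (Fin (n i))) → ℝ}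
    (hφ : IsPotential K f φ) {i j : Fin N} {z : ∀ i, EuclideanSpace ℝ (Fin (n i))}
    (hz : z ∈ jointK K) {yi : EuclideanSpace ℝ (Fin (n i))} {yj : EuclideanSpace ℝ (Fin (n j))}
    (hyi : z i + yi ∈ K i) (hyj : z j + yj ∈ K j) :
    hij f i j z yi yj = φ (update (update z i (z i + yi)) j (z j + yj)) - φ z := by
  have hi := hφ i z hz _ hyi
  have hj := hφ j _ (update_mem_jointK hz hyi) _ hyj
  unfold hij
  linarith

theorem IsPotential.hijCondition (h0 : (0 : ∀ i, EuclideanSpace ℝ (Fin (n i))) ∈ jointK K)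
    {φ : (∀ i, EuclideanSpace ℝ (Fin (n i))) → ℝ} (hφ : IsPotential K f φ) :
    HijCondition K f := by
  intro i j hlt z hz yi yj hyi hyj
  have hne : i ≠ j := hlt.ne
  set z₀ := update (update z i 0) j 0
  have hz₀ : z₀ ∈ jointK K := update_mem_jointK (update_mem_jointK hz (h0 i)) (h0 j)
  have hz₀i : z₀ i = 0 := by simp [z₀, hne]
  have hz₀j : z₀ j = 0 := by simp [z₀]
  have hmove : ∀ (a : EuclideanSpace ℝ (Fin (n i))) (b : EuclideanSpace ℝ (Fin (n j))),
      update (update z₀ i a) j b = update (update z i a) j b := by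
    intro a b
    simp only [z₀, update_comm hne, update_idem]
  rw [hφ.hij_eq hz hyi hyj, hφ.hij_eq hz₀ (by rwa [hz₀i, zero_add]) (by rwa [hz₀j, zero_add]),
    hφ.hij_eq hz₀ (by rw [hz₀i, zero_add]; exact hz i) (by rw [hz₀j, zero_add]; exact hz j),
    hz₀i, hz₀j, zero_add, zero_add, hmove, hmove]
  simp

theorem HijCondition.cross_difference (h : HijCondition K f) {i j : Fin N} (hlt : i < j)
    {w : ∀ i, EuclideanSpace ℝ (Fin (n i))} (hw : w ∈ jointK K) (hwj : w j = 0)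
    {a : EuclideanSpace ℝ (Fin (n i))} (ha : a ∈ K i)
    {b : EuclideanSpace ℝ (Fin (n j))} (hb : b ∈ K j) :
    f j (update (update w i a) j b) - f j (update w i a) - (f j (update w j b) - f j w)
      = f i (update (update w i a) j b) - f i (update w j b) - (f i (update w i a) - f i w) := by
  have hne : i ≠ j := hlt.ne
  have H := h i j hlt (update w j b) (update_mem_jointK hw hb) (a - w i) 0
    (by simpa [hne] using ha) (by simpa using hb)
  have hw₀ : update w j 0 = w := by rw [← hwj, update_eq_self]
  simp only [hij, update_of_ne hne, update_self, update_comm hne, update_idem, update_eq_self,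
    hw₀, add_sub_cancel, add_sub_cancel_right, add_zero, zero_add] at H
  rw [update_comm hne]
  linarith

theorem HijCondition.sequentialPotential_summand_update (h : HijCondition K f)
    (h0 : (0 : ∀ i, EuclideanSpace ℝ (Fin (n i))) ∈ jointK K)
    {x : ∀ i, EuclideanSpace ℝ (Fin (n i))} (hx : x ∈ jointK K)
    {i : Fin N} {v : EuclideanSpace ℝ (Fin (n i))} (hv : v ∈ K i) (k : Fin N) :
    f k (truncate (k + 1) (update x i v)) - f k (truncate k (update x i v))
        - (f k (truncate (k + 1) x) - f k (truncate k x))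
      = f i (truncate (k + 1) (update x i v)) - f i (truncate (k + 1) x)
        - (f i (truncate k (update x i v)) - f i (truncate k x)) := by
  rcases lt_trichotomy i k with hik | rfl | hki
  · have hwk : truncate k x k = 0 := truncate_apply_of_le le_rfl x
    have H := h.cross_difference hik (truncate_mem_jointK h0 hx k) hwk hv (hx k)
    rwa [truncate_update_of_lt (by omega), truncate_update_of_lt hik, truncate_succ,
      update_comm hik.ne.symm]
  · rw [truncate_update_of_le le_rfl]
    ring
  · rw [truncate_update_of_le (by omega), truncate_update_of_le hki.le]
    ring

theorem HijCondition.isPotential_sequentialPotential (h : HijCondition K f)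
    (h0 : (0 : ∀ i, EuclideanSpace ℝ (Fin (n i))) ∈ jointK K) :
    IsPotential K f (sequentialPotential f) := by
  intro i x hx v hv
  set g : ℕ → ℝ := fun t => f i (truncate t (update x i v)) - f i (truncate t x)
  symm
  calc sequentialPotential f (update x i v) - sequentialPotential f x
      = ∑ k : Fin N, (g (k + 1) - g k) := by
        rw [sequentialPotential, sequentialPotential, ← Finset.sum_sub_distrib]
        exact Finset.sum_congr rfl fun k _ => h.sequentialPotential_summand_update h0 hx hv k
    _ = g N - g 0 := by
        rw [Fin.sum_univ_eq_sum_range (fun t => g (t + 1) - g t), Finset.sum_range_sub]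
    _ = f i (update x i v) - f i x := by
        simp only [g, truncate_eq_self, truncate_zero, sub_self, sub_zero]

end Game

theorem stmt8_general {N : ℕ} {n : Fin N → ℕ}
    (K : ∀ i, Set (EuclideanSpace ℝ (Fin (n i))))
    (f : Fin N → (∀ i, EuclideanSpace ℝ (Fin (n i))) → ℝ)
    (h0 : (0 : ∀ i, EuclideanSpace ℝ (Fin (n i))) ∈ jointK K) :
    IsPotentialGame K f ↔
      ∀ i j : Fin N, i < j → ∀ z ∈ jointK K,
        ∀ (yi : EuclideanSpace ℝ (Fin (n i))) (yj : EuclideanSpace ℝ (Fin (n j))),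
          z i + yi ∈ K i → z j + yj ∈ K j →
          hij f i j z yi yj
            = hij f i j (Function.update (Function.update z i 0) j 0) (z i + yi) (z j + yj)
              - hij f i j (Function.update (Function.update z i 0) j 0) (z i) (z j) :=
  ⟨fun ⟨_, hφ⟩ => hφ.hijCondition h0,
    fun h => ⟨sequentialPotential f, HijCondition.isPotential_sequentialPotential h h0⟩⟩

/-- If `0 ∈ K` and each `K i` is symmetric, the game is a potential game
iff for all players `i < j`,
`h_{ij}(z_i,z_j,y_i,y_j;z₋) = h_{ij}(0,0,z_i+y_i,z_j+y_j;z₋) − h_{ij}(0,0,z_i,z_j;z₋)`. -/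
theorem stmt8 {N : ℕ} {n : Fin N → ℕ}
    (K : ∀ i, Set (EuclideanSpace ℝ (Fin (n i))))
    (f : Fin N → (∀ i, EuclideanSpace ℝ (Fin (n i))) → ℝ)
    (h0 : (0 : ∀ i, EuclideanSpace ℝ (Fin (n i))) ∈ jointK K)
    (hsym : ∀ i, ∀ v ∈ K i, -v ∈ K i) :
    IsPotentialGame K f ↔
      ∀ i j : Fin N, i < j → ∀ z ∈ jointK K,
        ∀ (yi : EuclideanSpace ℝ (Fin (n i))) (yj : EuclideanSpace ℝ (Fin (n j))),
          z i + yi ∈ K i → z j + yj ∈ K j →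
          hij f i j z yi yj
            = hij f i j (Function.update (Function.update z i 0) j 0) (z i + yi) (z j + yj)
              - hij f i j (Function.update (Function.update z i 0) j 0) (z i) (z j) :=
  stmt8_general K f h0
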